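/- arXiv:1402.2500 — 2 statements merged into one kernel-verified Lean document; each statement's English description precedes it below -/
import Mathlib

section
/- Let (W,S) be a Coxeter system with reflection set T and length function ℓ. Let t1, t2 ∈ T be distinct reflections and z ∈ W with ℓ(z) < ℓ(z t1) and ℓ(z t1 t2) < ℓ(z t1). Then there exist reflections t1', t2' ∈ ⟨t1,t2⟩ ∩ T with t1' t2' = t1 t2, such that the pair (t1', t2') lies in the Hurwitz orbit of (t1, t2) under the braid group B_2, and such that ℓ(z t1') < max(ℓ(z), ℓ(z t1 t2)) < ℓ(z t1); moreover one of the following holds: ℓ(z) < ℓ(z t1') < ℓ(z t1' t2'), or ℓ(z) > ℓ(z t1') > ℓ(z t1' t2'), or ℓ(z) > ℓ(z t1') < ℓ(z t1' t2'). -/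
/-- The Hurwitz move `σᵢ` on tuples of group elements (represented as lists):
`(t₁, …, a, b, …, tₙ) ↦ (t₁, …, a b a, a, …, tₙ)` (recall that reflections are
involutions, so `a b a = a b a⁻¹`). -/
def HurwitzMove {W : Type*} [Group W] (l l' : List W) : Prop :=
  ∃ (l₁ l₂ : List W) (a b : W),
    l = l₁ ++ [a, b] ++ l₂ ∧ l' = l₁ ++ [a * b * a, a] ++ l₂

/-!
The reflections of the dihedral reflection subgroup `⟨t₁, t₂⟩` are `r m = (t₁ t₂) ^ m * t₁`,
and `(r m, r (m - 1))` is in the Hurwitz orbit of `(r 0, r (-1)) = (t₁, t₂)` with product `t₁ t₂`.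
So it suffices to find `m` with `ℓ (z r m) < ℓ z` or `ℓ (z r m) < ℓ (z t₁ t₂)`; the trichotomy then
holds because right multiplication by a reflection never preserves length.

The tool is the reflection cocycle `η(w, t) = ±1` obtained from Tits' action of `W` on
`W × {±1}`: for a reflection `t`, `η(w, t) = -1` iff `ℓ (w t) < ℓ w`. A dihedral reflection
`r p` of minimal length is shorter than `c = t₁ t₂`: otherwise `r (p + 1)` is a right inversion
of `r p = w s w⁻¹` (with `ℓ (r p) = 2 ℓ w + 1`), and the cocycle identity makes `r (p - 1)` or
`r (p + 1)` a right inversion of `w⁻¹`, hence shorter than `r p`. Finally, either `r (p + 1)` is a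
right inversion of `z`, or `η(z c, r (p - 1)) = η(z, r (p + 1)) η(c, r (p - 1)) = -1`, which says
`ℓ (z r p) < ℓ (z c)`.
-/

section Dihedral

variable {G : Type*} [Group G] {a b : G}

def dihedralRefl (a b : G) (m : ℤ) : G := (a * b) ^ m * a

theorem zpow_mul_dihedralRefl (j m : ℤ) :
    (a * b) ^ j * dihedralRefl a b m = dihedralRefl a b (j + m) := by
  rw [dihedralRefl, dihedralRefl, ← mul_assoc, ← zpow_add]

theorem dihedralRefl_zero : dihedralRefl a b 0 = a := by
  rw [dihedralRefl, zpow_zero, one_mul]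

theorem dihedralRefl_mem_closure (m : ℤ) : dihedralRefl a b m ∈ Subgroup.closure {a, b} := by
  have ha : a ∈ Subgroup.closure {a, b} := Subgroup.subset_closure (by simp)
  have hb : b ∈ Subgroup.closure {a, b} := Subgroup.subset_closure (by simp)
  exact mul_mem (zpow_mem (mul_mem ha hb) m) ha

theorem dihedralRefl_add_of_pow_eq_one {n : ℕ} (hn : (a * b) ^ n = 1) (m : ℤ) :
    dihedralRefl a b (m + n) = dihedralRefl a b m := by
  rw [dihedralRefl, dihedralRefl, zpow_add, zpow_natCast, hn, mul_one]

theorem mul_inv_rev_of_mul_self_eq_one (ha : a * a = 1) (hb : b * b = 1) :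
    (a * b)⁻¹ = b * a := by
  rw [mul_inv_rev, inv_eq_of_mul_eq_one_right ha, inv_eq_of_mul_eq_one_right hb]

theorem mul_zpow_eq_zpow_neg_mul (ha : a * a = 1) (hb : b * b = 1) (m : ℤ) :
    a * (a * b) ^ m = (a * b) ^ (-m) * a := by
  have hconj : a * (a * b) * a⁻¹ = (a * b)⁻¹ := by
    rw [mul_inv_rev_of_mul_self_eq_one ha hb, inv_eq_of_mul_eq_one_right ha, ← mul_assoc, ha,
      one_mul]
  rw [zpow_neg, ← inv_zpow, ← hconj, conj_zpow, inv_mul_cancel_right]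

theorem dihedralRefl_mul_dihedralRefl (ha : a * a = 1) (hb : b * b = 1) (m k : ℤ) :
    dihedralRefl a b m * dihedralRefl a b k = (a * b) ^ (m - k) := by
  rw [dihedralRefl, dihedralRefl, mul_assoc, ← mul_assoc a, mul_zpow_eq_zpow_neg_mul ha hb,
    mul_assoc, ha, mul_one, ← zpow_add, sub_eq_add_neg]

theorem dihedralRefl_neg_one (hb : b * b = 1) : dihedralRefl a b (-1) = b := by
  rw [dihedralRefl, zpow_neg_one, mul_inv_rev, inv_mul_cancel_right,
    inv_eq_of_mul_eq_one_right hb]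

theorem conj_dihedralRefl (ha : a * a = 1) (hb : b * b = 1) (j m : ℤ) :
    (a * b) ^ j * dihedralRefl a b m * ((a * b) ^ j)⁻¹ = dihedralRefl a b (m + 2 * j) := by
  rw [zpow_mul_dihedralRefl, dihedralRefl, dihedralRefl, mul_assoc, ← zpow_neg,
    mul_zpow_eq_zpow_neg_mul ha hb, neg_neg, ← mul_assoc, ← zpow_add]
  ring_nf

theorem dihedralRefl_mul_dihedralRefl_mul_dihedralRefl (ha : a * a = 1) (hb : b * b = 1)
    (p m : ℤ) :
    dihedralRefl a b p * dihedralRefl a b m * dihedralRefl a b p =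
      dihedralRefl a b (2 * p - m) := by
  rw [dihedralRefl_mul_dihedralRefl ha hb, zpow_mul_dihedralRefl]
  ring_nf

theorem exists_dihedralRefl_eq_conj (ha : a * a = 1) (hb : b * b = 1) (m : ℤ) :
    ∃ g : G, dihedralRefl a b m = g * a * g⁻¹ ∨ dihedralRefl a b m = g * b * g⁻¹ := by
  obtain ⟨k, rfl | rfl⟩ := Int.even_or_odd' m
  · refine ⟨(a * b) ^ k, Or.inl ?_⟩
    have h := conj_dihedralRefl ha hb k 0
    rwa [zero_add, dihedralRefl_zero, eq_comm] at h
  · refine ⟨(a * b) ^ (k + 1), Or.inr ?_⟩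
    have h := conj_dihedralRefl ha hb (k + 1) (-1)
    rwa [dihedralRefl_neg_one hb, eq_comm, show -1 + 2 * (k + 1) = 2 * k + 1 by ring] at h

theorem dihedralRefl_add_one_ne (ha : a * a = 1) (hb : b * b = 1) (hne : a ≠ b) (m : ℤ) :
    dihedralRefl a b (m + 1) ≠ dihedralRefl a b m := by
  intro h
  have hab : a * b = 1 := by
    rw [← zpow_one (a * b), ← add_sub_cancel_left m 1, ← dihedralRefl_mul_dihedralRefl ha hb, h,
      dihedralRefl_mul_dihedralRefl ha hb, sub_self, zpow_zero]
  exact hne ((mul_eq_one_iff_eq_inv.mp hab).trans (inv_eq_of_mul_eq_one_right hb))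

theorem hurwitzMove_dihedralRefl (ha : a * a = 1) (hb : b * b = 1) (m : ℤ) :
    HurwitzMove [dihedralRefl a b m, dihedralRefl a b (m - 1)]
      [dihedralRefl a b (m + 1), dihedralRefl a b m] := by
  refine ⟨[], [], _, _, rfl, ?_⟩
  rw [dihedralRefl_mul_dihedralRefl_mul_dihedralRefl ha hb]
  ring_nf
  rfl

theorem eqvGen_hurwitzMove_dihedralRefl (ha : a * a = 1) (hb : b * b = 1) (m : ℤ) :
    Relation.EqvGen HurwitzMove [a, b] [dihedralRefl a b m, dihedralRefl a b (m - 1)] := by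
  induction m using Int.induction_on with
  | zero =>
    rw [zero_sub, dihedralRefl_zero, dihedralRefl_neg_one hb]
    exact .refl _
  | succ k ih =>
    refine .trans _ _ _ ih ?_
    rw [add_sub_cancel_right]
    exact .rel _ _ (hurwitzMove_dihedralRefl ha hb k)
  | pred k ih =>
    refine .trans _ _ _ ih (.symm _ _ (.rel _ _ ?_))
    simpa using hurwitzMove_dihedralRefl ha hb (-k - 1)

end Dihedral

section ReflPerm

variable {G : Type*}

open Classical in
noncomputable def signAt (t x : G) : ℤˣ := if x = t then -1 else 1

theorem signAt_of_ne {t x : G} (h : x ≠ t) : signAt t x = 1 := if_neg h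

theorem signAt_eq_neg_one_iff {t x : G} : signAt t x = -1 ↔ x = t := by
  unfold signAt
  split_ifs with h <;> simp [h]

variable [Group G]

theorem signAt_conj (t g x : G) : signAt t (g * x * g⁻¹) = signAt (g⁻¹ * t * g) x := by
  unfold signAt
  congr 1
  exact propext ⟨fun h => by rw [← h]; group, fun h => by rw [h]; group⟩

/- Tits' construction: `t` conjugates the first coordinate and flips the sign exactly at `x = t`.
Acting on all of `G` rather than only on reflections avoids a subtype. -/
noncomputable def reflPerm (t : G) : Equiv.Perm (G × ℤˣ) where
  toFun p := (t * p.1 * t⁻¹, signAt t p.1 * p.2)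
  invFun p := (t⁻¹ * p.1 * t, signAt t (t⁻¹ * p.1 * t) * p.2)
  left_inv p := Prod.ext (by simp [mul_assoc]) (by simp [← mul_assoc, Int.units_mul_self])
  right_inv p := Prod.ext (by simp [mul_assoc]) (by simp [← mul_assoc, Int.units_mul_self])

theorem reflPerm_apply (t : G) (p : G × ℤˣ) :
    reflPerm t p = (t * p.1 * t⁻¹, signAt t p.1 * p.2) := rfl

theorem reflPerm_mul_reflPerm_pow_apply {a b : G} (ha : a * a = 1) (hb : b * b = 1) (n : ℕ)
    (x : G) (ε : ℤˣ) :
    ((reflPerm a * reflPerm b) ^ n) (x, ε) =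
      ((a * b) ^ n * x * ((a * b) ^ n)⁻¹,
        (∏ k ∈ Finset.range (2 * n), signAt (dihedralRefl b a k) x) * ε) := by
  induction n generalizing x ε with
  | zero => simp
  | succ n ih =>
    have hshift : ∀ k : ℕ, signAt (dihedralRefl b a k) (a * (b * x * b⁻¹) * a⁻¹) =
        signAt (dihedralRefl b a ↑(k + 1 + 1)) x := by
      intro k
      rw [show a * (b * x * b⁻¹) * a⁻¹ = a * b * x * (a * b)⁻¹ by group, signAt_conj,
        mul_inv_rev_of_mul_self_eq_one ha hb, ← inv_inv (a * b),
        mul_inv_rev_of_mul_self_eq_one ha hb, ← zpow_one (b * a), conj_dihedralRefl hb ha]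
      push_cast
      ring_nf
    have h₀ : signAt b x = signAt (dihedralRefl b a ↑(0 : ℕ)) x := by
      rw [Nat.cast_zero, dihedralRefl_zero]
    have h₁ : signAt a (b * x * b⁻¹) = signAt (dihedralRefl b a ↑(0 + 1 : ℕ)) x := by
      rw [signAt_conj, zero_add, Nat.cast_one, dihedralRefl, zpow_one,
        inv_eq_of_mul_eq_one_right hb]
    rw [pow_succ, Equiv.Perm.mul_apply, Equiv.Perm.mul_apply, reflPerm_apply, reflPerm_apply]
    dsimp only
    rw [ih, mul_add_one, Finset.prod_range_succ', Finset.prod_range_succ', ← h₀, ← h₁]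
    simp only [hshift]
    refine Prod.ext ?_ ?_
    · rw [pow_succ, mul_inv_rev, mul_inv_rev]
      simp only [mul_assoc]
    · simp only [mul_assoc]

-- `k ↦ dihedralRefl b a k` has period `n`, so the `2 n` signs cancel in pairs.
theorem reflPerm_mul_reflPerm_pow_eq_one {a b : G} (ha : a * a = 1) (hb : b * b = 1) {n : ℕ}
    (hn : (a * b) ^ n = 1) : (reflPerm a * reflPerm b) ^ n = 1 := by
  have hn' : (b * a) ^ n = 1 := by
    rw [← mul_inv_rev_of_mul_self_eq_one ha hb, inv_pow, hn, inv_one]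
  ext1 ⟨x, ε⟩
  rw [reflPerm_mul_reflPerm_pow_apply ha hb, hn, one_mul, inv_one, mul_one, two_mul,
    Finset.prod_range_add]
  simp only [Nat.cast_add, add_comm (n : ℤ), dihedralRefl_add_of_pow_eq_one hn',
    ← Finset.prod_mul_distrib, Int.units_mul_self, Finset.prod_const_one, one_mul,
    Equiv.Perm.one_apply]

end ReflPerm

namespace CoxeterSystem

variable {B W : Type*} [Group W] {M : CoxeterMatrix B} (cs : CoxeterSystem M W)

local prefix:100 "s" => cs.simple
local prefix:100 "ℓ" => cs.length

theorem isLiftable_reflPerm : M.IsLiftable fun i => reflPerm (s i) := fun i j =>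
  reflPerm_mul_reflPerm_pow_eq_one (cs.simple_mul_simple_self i) (cs.simple_mul_simple_self j)
    (cs.simple_mul_simple_pow i j)

noncomputable def signRep : W →* Equiv.Perm (W × ℤˣ) := cs.lift ⟨_, cs.isLiftable_reflPerm⟩

noncomputable def invSign (w t : W) : ℤˣ := (cs.signRep w (t, 1)).2

theorem signRep_apply (w t : W) (ε : ℤˣ) :
    cs.signRep w (t, ε) = (w * t * w⁻¹, ε * cs.invSign w t) := by
  induction w using cs.simple_induction_left generalizing t ε with
  | one => simp [invSign]
  | mul_simple_left w i ih =>
    have hstep : ∀ ε : ℤˣ, cs.signRep (s i * w) (t, ε) =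
        (s i * w * t * (s i * w)⁻¹, signAt (s i) (w * t * w⁻¹) * (ε * cs.invSign w t)) := by
      intro ε
      rw [map_mul, Equiv.Perm.mul_apply, ih, signRep, cs.lift_apply_simple, reflPerm_apply]
      simp only [mul_inv_rev, mul_assoc]
    have hsign : cs.invSign (s i * w) t = signAt (s i) (w * t * w⁻¹) * cs.invSign w t := by
      change (cs.signRep (s i * w) (t, 1)).2 = _
      rw [hstep, one_mul]
    rw [hstep, hsign, mul_left_comm]

theorem invSign_mul (u v t : W) :
    cs.invSign (u * v) t = cs.invSign u (v * t * v⁻¹) * cs.invSign v t := by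
  rw [invSign, map_mul, Equiv.Perm.mul_apply, signRep_apply, signRep_apply, one_mul, mul_comm]

theorem invSign_one (t : W) : cs.invSign 1 t = 1 := by
  simp [invSign]

theorem invSign_simple (i : B) (t : W) : cs.invSign (s i) t = signAt (s i) t := by
  rw [invSign, signRep, cs.lift_apply_simple, reflPerm_apply, mul_one]

theorem invSign_inv_conj (u t : W) : cs.invSign u⁻¹ (u * t * u⁻¹) = cs.invSign u t := by
  have h := cs.invSign_mul u⁻¹ u t
  rw [inv_mul_cancel, invSign_one] at h
  rw [← mul_right_inj (cs.invSign u t), ← mul_comm, ← h, Int.units_mul_self]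

theorem invSign_conj (u g x : W) :
    cs.invSign (u * g * u⁻¹) x =
      cs.invSign u⁻¹ (u * g * u⁻¹ * x * (u * g * u⁻¹)⁻¹) * cs.invSign g (u⁻¹ * x * u) *
        cs.invSign u⁻¹ x := by
  rw [cs.invSign_mul, cs.invSign_mul, inv_inv, ← cs.invSign_inv_conj u]
  simp only [mul_inv_rev, inv_inv, mul_assoc]

theorem invSign_self {t : W} (ht : cs.IsReflection t) : cs.invSign t t = -1 := by
  obtain ⟨u, i, rfl⟩ := ht
  rw [invSign_conj, mul_inv_cancel_right, invSign_simple,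
    show u⁻¹ * (u * s i * u⁻¹) * u = s i by group, signAt_eq_neg_one_iff.2 rfl, mul_neg_one,
    neg_mul, Int.units_mul_self]

theorem invSign_eq_one_of_conj_eq {t x : W} (ht : cs.IsReflection t) (hxt : x ≠ t)
    (hcomm : t * x * t⁻¹ = x) : cs.invSign t x = 1 := by
  obtain ⟨u, i, rfl⟩ := ht
  rw [invSign_conj, hcomm, invSign_simple, signAt_of_ne, mul_one, Int.units_mul_self]
  rintro h
  exact hxt (by rw [← h]; group)

theorem length_mul_lt_of_invSign_eq_neg_one {w t : W} (h : cs.invSign w t = -1) :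
    ℓ (w * t) < ℓ w := by
  induction hn : ℓ w generalizing w with
  | zero =>
    rw [cs.length_eq_zero_iff] at hn
    rw [hn, invSign_one] at h
    exact absurd h (by decide)
  | succ n ih =>
    obtain ⟨i, hi⟩ := cs.exists_leftDescent_of_ne_one (w := w) (by rintro rfl; simp at hn)
    have hlen : ℓ (s i * w) = n := by
      have := cs.length_simple_mul w i
      unfold IsLeftDescent at hi
      omega
    rw [← cs.simple_mul_simple_cancel_left (w := w) i, invSign_mul, invSign_simple] at h
    by_cases hfix : s i * w * t * (s i * w)⁻¹ = s i
    · rw [mul_inv_eq_iff_eq_mul, cs.simple_mul_simple_cancel_left] at hfix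
      have hwt : w * t = s i * w := by
        conv_rhs => rw [← hfix]
        rw [← mul_assoc, ← mul_assoc, cs.simple_mul_simple_self, one_mul]
      rw [hwt]
      omega
    · rw [signAt_of_ne hfix, one_mul] at h
      have h₁ := ih h hlen
      have h₂ := cs.length_simple_mul (s i * w * t) i
      rw [← mul_assoc, ← mul_assoc, cs.simple_mul_simple_self, one_mul] at h₂
      omega

theorem invSign_eq_neg_one_iff {w t : W} (ht : cs.IsReflection t) :
    cs.invSign w t = -1 ↔ ℓ (w * t) < ℓ w := by
  refine ⟨cs.length_mul_lt_of_invSign_eq_neg_one, fun hlt => ?_⟩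
  refine (Int.units_eq_one_or _).resolve_left fun h => ?_
  have h' : cs.invSign (w * t) t = -1 := by
    rw [invSign_mul, mul_inv_cancel_right, h, one_mul, cs.invSign_self ht]
  have := cs.length_mul_lt_of_invSign_eq_neg_one h'
  rw [mul_assoc, ht.mul_self, mul_one] at this
  omega

theorem invSign_eq_one_iff {w t : W} (ht : cs.IsReflection t) :
    cs.invSign w t = 1 ↔ ℓ w < ℓ (w * t) := by
  have hne := ht.length_mul_left_ne w
  rw [← not_iff_not, ← ne_eq, Int.units_ne_iff_eq_neg, cs.invSign_eq_neg_one_iff ht]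
  omega

theorem length_mul_mul_lt_of_length_mul_lt {u v t : W} (ht : cs.IsReflection t)
    (hv : ℓ (v * t) < ℓ v) (hu : ℓ u < ℓ (u * (v * t * v⁻¹))) : ℓ (u * v * t) < ℓ (u * v) := by
  rw [← cs.invSign_eq_neg_one_iff ht, invSign_mul, (cs.invSign_eq_one_iff (ht.conj v)).2 hu,
    (cs.invSign_eq_neg_one_iff ht).2 hv, one_mul]

theorem length_simple_mul_mul_simple_add_two {t : W} (ht : cs.IsReflection t) {i : B}
    (hne : s i ≠ t) (h : ℓ (s i * t) < ℓ t) : ℓ (s i * t * s i) + 2 = ℓ t := by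
  have hsi := cs.isReflection_simple i
  have hts : ℓ (t * s i) < ℓ t := by
    rwa [← cs.length_inv, mul_inv_rev, ht.inv, cs.inv_simple]
  have h₁ := cs.length_simple_mul t i
  have h₂ := cs.length_mul_simple (s i * t) i
  suffices ¬ℓ (s i * t * s i) = ℓ (s i * t) + 1 by omega
  intro hup
  have hcomm : t * s i * t⁻¹ = s i := by
    have h₃ := cs.invSign_mul (s i) (s i * t) (s i)
    rw [cs.simple_mul_simple_cancel_left, (cs.invSign_eq_neg_one_iff hsi).2 hts,
      (cs.invSign_eq_one_iff hsi).2 (by omega), mul_one, invSign_simple, eq_comm,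
      signAt_eq_neg_one_iff, show s i * t * s i * (s i * t)⁻¹ = s i * (t * s i * t⁻¹) * (s i)⁻¹
        by group] at h₃
    exact mul_left_cancel (mul_inv_eq_iff_eq_mul.mp h₃)
  have h₄ := cs.invSign_eq_one_of_conj_eq ht hne hcomm
  rw [(cs.invSign_eq_neg_one_iff hsi).2 hts] at h₄
  exact absurd h₄ (by decide)

theorem exists_eq_conj_simple_and_length_eq {t : W} (ht : cs.IsReflection t) :
    ∃ (w : W) (i : B), t = w * s i * w⁻¹ ∧ ℓ t = 2 * ℓ w + 1 := by
  induction hn : ℓ t using Nat.strong_induction_on generalizing t with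
  | _ n ih =>
  have ht₁ : t ≠ 1 := by
    rintro rfl
    simpa using ht.odd_length
  obtain ⟨i, hi⟩ := cs.exists_leftDescent_of_ne_one ht₁
  by_cases hti : t = s i
  · exact ⟨1, i, by simp [hti], by simp [← hn, hti]⟩
  have hlen := cs.length_simple_mul_mul_simple_add_two ht (Ne.symm hti) hi
  have ht' : cs.IsReflection (s i * t * s i) := by simpa using ht.conj (s i)
  obtain ⟨w, j, hw, hlw⟩ := ih _ (by omega) ht' rfl
  have ht_eq : t = s i * w * s j * (s i * w)⁻¹ := by
    rw [mul_inv_rev, cs.inv_simple,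
      show s i * w * s j * (w⁻¹ * s i) = s i * (w * s j * w⁻¹) * s i by group, ← hw]
    simp [mul_assoc]
  refine ⟨s i * w, j, ht_eq, ?_⟩
  have hconj_le : ℓ t ≤ 2 * ℓ (s i * w) + 1 := by
    have h₁ := cs.length_mul_le (s i * w * s j) (s i * w)⁻¹
    have h₂ := cs.length_mul_le (s i * w) (s j)
    rw [cs.length_inv, ← ht_eq] at h₁
    rw [cs.length_simple] at h₂
    omega
  have := cs.length_simple_mul w i
  omega

theorem length_lt_or_length_conj_lt_of_length_mul_lt {a x : W} (ha : cs.IsReflection a)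
    (hx : cs.IsReflection x) (hxa : x ≠ a) (h : ℓ (a * x) < ℓ a) :
    ℓ x < ℓ a ∨ ℓ (a * x * a) < ℓ a := by
  obtain ⟨w, i, hwa, hlen⟩ := cs.exists_eq_conj_simple_and_length_eq ha
  have hneg := (cs.invSign_eq_neg_one_iff hx).2 h
  rw [hwa, invSign_conj, ← hwa, ha.inv, invSign_simple, signAt_of_ne, mul_one] at hneg
  swap
  · rintro hxi
    exact hxa (by rw [hwa, ← hxi]; group)
  have hshort : ∀ y, cs.invSign w⁻¹ y = -1 → ℓ y < ℓ a := by
    intro y hy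
    have h₁ := cs.length_mul_lt_of_invSign_eq_neg_one hy
    have h₂ := cs.length_le_length_mul_add_left w⁻¹ y
    rw [cs.length_inv] at h₁ h₂
    omega
  rcases Int.units_eq_one_or (cs.invSign w⁻¹ x) with h₁ | h₁
  · rw [h₁, mul_one] at hneg
    exact Or.inr (hshort _ hneg)
  · exact Or.inl (hshort _ h₁)

variable {t₁ t₂ : W}

theorem isReflection_dihedralRefl (h₁ : cs.IsReflection t₁) (h₂ : cs.IsReflection t₂) (m : ℤ) :
    cs.IsReflection (dihedralRefl t₁ t₂ m) := by
  obtain ⟨g, h | h⟩ := exists_dihedralRefl_eq_conj h₁.mul_self h₂.mul_self m <;> rw [h]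
  exacts [h₁.conj g, h₂.conj g]

theorem exists_length_dihedralRefl_lt (h₁ : cs.IsReflection t₁) (h₂ : cs.IsReflection t₂)
    (hne : t₁ ≠ t₂) : ∃ p : ℤ, ℓ (dihedralRefl t₁ t₂ p) < ℓ (t₁ * t₂) := by
  set p := Function.argmin fun m => ℓ (dihedralRefl t₁ t₂ m)
  have hmin : ∀ m, ¬ℓ (dihedralRefl t₁ t₂ m) < ℓ (dihedralRefl t₁ t₂ p) :=
    Function.not_lt_argmin _
  refine ⟨p, ?_⟩
  have hprod : dihedralRefl t₁ t₂ p * dihedralRefl t₁ t₂ (p + 1) = (t₁ * t₂)⁻¹ := by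
    rw [dihedralRefl_mul_dihedralRefl h₁.mul_self h₂.mul_self, sub_add_cancel_left, zpow_neg_one]
  have hne' := (cs.isReflection_dihedralRefl h₁ h₂ (p + 1)).length_mul_left_ne
    (dihedralRefl t₁ t₂ p)
  rw [hprod, cs.length_inv] at hne'
  by_contra hge
  rcases cs.length_lt_or_length_conj_lt_of_length_mul_lt (cs.isReflection_dihedralRefl h₁ h₂ p)
    (cs.isReflection_dihedralRefl h₁ h₂ (p + 1))
    (dihedralRefl_add_one_ne h₁.mul_self h₂.mul_self hne p)
    (by rw [hprod, cs.length_inv]; omega) with h | h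
  · exact hmin _ h
  · rw [dihedralRefl_mul_dihedralRefl_mul_dihedralRefl h₁.mul_self h₂.mul_self] at h
    exact hmin _ h

theorem exists_length_mul_dihedralRefl_lt (h₁ : cs.IsReflection t₁) (h₂ : cs.IsReflection t₂)
    (hne : t₁ ≠ t₂) (z : W) :
    ∃ m : ℤ, ℓ (z * dihedralRefl t₁ t₂ m) < ℓ z ∨
      ℓ (z * dihedralRefl t₁ t₂ m) < ℓ (z * (t₁ * t₂)) := by
  obtain ⟨p, hp⟩ := cs.exists_length_dihedralRefl_lt h₁ h₂ hne
  by_cases hz : ℓ (z * dihedralRefl t₁ t₂ (p + 1)) < ℓ z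
  · exact ⟨p + 1, Or.inl hz⟩
  refine ⟨p, Or.inr ?_⟩
  have hstep : t₁ * t₂ * dihedralRefl t₁ t₂ (p - 1) = dihedralRefl t₁ t₂ p := by
    rw [← zpow_one (t₁ * t₂), zpow_mul_dihedralRefl, add_sub_cancel]
  have hconj :
      t₁ * t₂ * dihedralRefl t₁ t₂ (p - 1) * (t₁ * t₂)⁻¹ = dihedralRefl t₁ t₂ (p + 1) := by
    rw [← zpow_one (t₁ * t₂), conj_dihedralRefl h₁.mul_self h₂.mul_self]
    ring_nf
  have hz' := (cs.isReflection_dihedralRefl h₁ h₂ (p + 1)).length_mul_left_ne z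
  have h := cs.length_mul_mul_lt_of_length_mul_lt (u := z)
    (cs.isReflection_dihedralRefl h₁ h₂ (p - 1)) (by rwa [hstep]) (by rw [hconj]; omega)
  rwa [mul_assoc z, hstep] at h

end CoxeterSystem

/-- Let `(W,S)` be a Coxeter system, let `t₁ ≠ t₂` be reflections and
`z ∈ W` with `ℓ(z) < ℓ(z t₁)` and `ℓ(z t₁ t₂) < ℓ(z t₁)`.  Then there exist reflections
`t₁', t₂' ∈ ⟨t₁, t₂⟩` with `t₁' t₂' = t₁ t₂`, lying in the Hurwitz orbit of `(t₁, t₂)`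
under `B₂`, such that `ℓ(z t₁') < max(ℓ(z), ℓ(z t₁ t₂)) < ℓ(z t₁)`, and one of:
`ℓ(z) < ℓ(z t₁') < ℓ(z t₁' t₂')`, or `ℓ(z) > ℓ(z t₁') > ℓ(z t₁' t₂')`, or
`ℓ(z) > ℓ(z t₁') < ℓ(z t₁' t₂')`. -/
theorem exists_hurwitz_replacement_dihedral
    {W : Type*} [Group W] {B : Type*}
    (M : CoxeterMatrix B) (cs : CoxeterSystem M W)
    (t₁ t₂ z : W) (h₁ : cs.IsReflection t₁) (h₂ : cs.IsReflection t₂) (hne : t₁ ≠ t₂)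
    (hup : cs.length z < cs.length (z * t₁))
    (hdown : cs.length (z * t₁ * t₂) < cs.length (z * t₁)) :
    ∃ t₁' t₂' : W, cs.IsReflection t₁' ∧ cs.IsReflection t₂' ∧
      t₁' ∈ Subgroup.closure {t₁, t₂} ∧ t₂' ∈ Subgroup.closure {t₁, t₂} ∧
      t₁' * t₂' = t₁ * t₂ ∧
      Relation.EqvGen HurwitzMove [t₁, t₂] [t₁', t₂'] ∧
      cs.length (z * t₁') < max (cs.length z) (cs.length (z * t₁ * t₂)) ∧
      max (cs.length z) (cs.length (z * t₁ * t₂)) < cs.length (z * t₁) ∧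
      ((cs.length z < cs.length (z * t₁') ∧
          cs.length (z * t₁') < cs.length (z * t₁' * t₂')) ∨
        (cs.length z > cs.length (z * t₁') ∧
          cs.length (z * t₁') > cs.length (z * t₁' * t₂')) ∨
        (cs.length z > cs.length (z * t₁') ∧
          cs.length (z * t₁') < cs.length (z * t₁' * t₂'))) := by
  obtain ⟨m, hm⟩ := cs.exists_length_mul_dihedralRefl_lt h₁ h₂ hne z
  have hprod : dihedralRefl t₁ t₂ m * dihedralRefl t₁ t₂ (m - 1) = t₁ * t₂ := by
    rw [dihedralRefl_mul_dihedralRefl h₁.mul_self h₂.mul_self, sub_sub_cancel, zpow_one]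
  have hz : z * dihedralRefl t₁ t₂ m * dihedralRefl t₁ t₂ (m - 1) = z * t₁ * t₂ := by
    rw [mul_assoc, hprod, mul_assoc]
  have hne₁ := (cs.isReflection_dihedralRefl h₁ h₂ m).length_mul_left_ne z
  have hne₂ := (cs.isReflection_dihedralRefl h₁ h₂ (m - 1)).length_mul_left_ne
    (z * dihedralRefl t₁ t₂ m)
  rw [← mul_assoc] at hm
  rw [hz] at hne₂
  refine ⟨_, _, cs.isReflection_dihedralRefl h₁ h₂ m, cs.isReflection_dihedralRefl h₁ h₂ (m - 1),
    dihedralRefl_mem_closure m, dihedralRefl_mem_closure (m - 1), hprod,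
    eqvGen_hurwitzMove_dihedralRefl h₁.mul_self h₂.mul_self m, by omega, max_lt hup hdown, ?_⟩
  rw [hz]
  omega
end

section
/- Let (W,S) be a Coxeter system of finite rank with reflection set T and length functions ℓ (with respect to S) and ℓ_T (with respect to T). Let c ∈ W with ℓ(c) = ℓ_T(c) = n, and let c = t1⋯tn be a factorization into reflections such that ℓ(t1⋯t_k) < ℓ(t1⋯t_{k+1}) for all 0 ≤ k < n. Then ℓ(t1⋯t_k) = ℓ_T(t1⋯t_k) = k for every 0 ≤ k ≤ n. -/
/-!
The `S`-length of the partial products starts at `0`, ends at `n` and increases strictly at each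
of the `n` steps, so it must increase by exactly one each time. For the reflection length, the
first `k` factors show `ℓ_T(t₁ ⋯ t_k) ≤ k`, and subadditivity of `ℓ_T` applied to
`c = (t₁ ⋯ t_k)(t_{k+1} ⋯ t_n)` gives `n ≤ ℓ_T(t₁ ⋯ t_k) + (n - k)`.
-/

/-- The reflection length `ℓ_T` of the paper. -/
noncomputable def reflLength {B : Type*} {W : Type*} [Group W] {M : CoxeterMatrix B}
    (cs : CoxeterSystem M W) (w : W) : ℕ :=
  sInf {n | ∃ l : List W, (∀ t ∈ l, cs.IsReflection t) ∧ l.prod = w ∧ l.length = n}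

theorem Nat.add_sub_le_of_lt_succ {f : ℕ → ℕ} {n : ℕ} (hf : ∀ k < n, f k < f (k + 1))
    {i j : ℕ} (hij : i ≤ j) (hjn : j ≤ n) : f i + (j - i) ≤ f j := by
  induction j, hij using Nat.le_induction with
  | base => simp
  | succ j hij ih =>
    have hstep := hf j (by omega)
    have hprev := ih (by omega)
    omega

theorem Nat.eq_self_of_lt_succ {f : ℕ → ℕ} {n : ℕ} (hf : ∀ k < n, f k < f (k + 1))
    (h0 : f 0 = 0) (hn : f n = n) {k : ℕ} (hk : k ≤ n) : f k = k := by
  have hlow := Nat.add_sub_le_of_lt_succ hf (Nat.zero_le k) hk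
  have hhigh := Nat.add_sub_le_of_lt_succ hf hk le_rfl
  omega

namespace CoxeterSystem

variable {B W : Type*} [Group W] {M : CoxeterMatrix B} (cs : CoxeterSystem M W)

theorem exists_reflection_factorization (w : W) :
    ∃ l : List W, (∀ t ∈ l, cs.IsReflection t) ∧ l.prod = w ∧ l.length = reflLength cs w := by
  obtain ⟨ω, rfl⟩ := cs.wordProd_surjective w
  have hword : ω.length ∈ {n | ∃ l : List W, (∀ t ∈ l, cs.IsReflection t) ∧
      l.prod = cs.wordProd ω ∧ l.length = n} :=
    ⟨ω.map cs.simple, by simpa using fun i _ => cs.isReflection_simple i, rfl, by simp⟩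
  exact Nat.sInf_mem ⟨_, hword⟩

theorem reflLength_prod_le {l : List W} (hl : ∀ t ∈ l, cs.IsReflection t) :
    reflLength cs l.prod ≤ l.length :=
  Nat.sInf_le ⟨l, hl, rfl, rfl⟩

theorem reflLength_mul_le (u v : W) :
    reflLength cs (u * v) ≤ reflLength cs u + reflLength cs v := by
  obtain ⟨lu, hlu, rfl, hlu_len⟩ := cs.exists_reflection_factorization u
  obtain ⟨lv, hlv, rfl, hlv_len⟩ := cs.exists_reflection_factorization v
  have hrefl : ∀ t ∈ lu ++ lv, cs.IsReflection t := by
    simpa [or_imp, forall_and] using ⟨hlu, hlv⟩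
  simpa [← hlu_len, ← hlv_len] using cs.reflLength_prod_le hrefl

end CoxeterSystem

theorem partial_products_length_eq_general
    {W : Type*} [Group W] {B : Type*}
    (M : CoxeterMatrix B) (cs : CoxeterSystem M W)
    (c : W) (n : ℕ) (hlen : cs.length c = n) (hreflLen : reflLength cs c = n)
    (l : List W) (hl : l.length = n)
    (hrefl : ∀ t ∈ l, cs.IsReflection t) (hprod : l.prod = c)
    (hinc : ∀ k < n, cs.length ((l.take k).prod) < cs.length ((l.take (k + 1)).prod)) :
    ∀ k ≤ n, cs.length ((l.take k).prod) = k ∧ reflLength cs ((l.take k).prod) = k := by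
  intro k hk
  have hlen_n : cs.length ((l.take n).prod) = n := by rw [← hl, List.take_length, hprod, hlen, hl]
  refine ⟨Nat.eq_self_of_lt_succ (f := fun k => cs.length ((l.take k).prod)) hinc
    (by simp) hlen_n hk, le_antisymm ?_ ?_⟩
  · simpa [hl, hk] using
      cs.reflLength_prod_le (l := l.take k) fun t ht => hrefl t (List.mem_of_mem_take ht)
  · have hdrop : reflLength cs (l.drop k).prod ≤ n - k := by
      simpa [hl] using cs.reflLength_prod_le fun t ht => hrefl t (List.mem_of_mem_drop ht)
    have hsplit := cs.reflLength_mul_le (l.take k).prod (l.drop k).prod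
    rw [← List.prod_append, List.take_append_drop, hprod, hreflLen] at hsplit
    omega

/-- Let `(W,S)` be a Coxeter system of finite rank, let `c ∈ W` with
`ℓ(c) = ℓ_T(c) = n`, and let `c = t₁ ⋯ tₙ` be a factorization into reflections whose
partial products are strictly increasing in `S`-length.  Then
`ℓ(t₁ ⋯ t_k) = ℓ_T(t₁ ⋯ t_k) = k` for every `0 ≤ k ≤ n`. -/
theorem partial_products_length_eq
    {W : Type*} [Group W] {B : Type*} [Finite B]
    (M : CoxeterMatrix B) (cs : CoxeterSystem M W)
    (c : W) (n : ℕ) (hlen : cs.length c = n) (hreflLen : reflLength cs c = n)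
    (l : List W) (hl : l.length = n)
    (hrefl : ∀ t ∈ l, cs.IsReflection t) (hprod : l.prod = c)
    (hinc : ∀ k < n, cs.length ((l.take k).prod) < cs.length ((l.take (k + 1)).prod)) :
    ∀ k ≤ n, cs.length ((l.take k).prod) = k ∧ reflLength cs ((l.take k).prod) = k :=
  partial_products_length_eq_general M cs c n hlen hreflLen l hl hrefl hprod hinc
end
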